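/- Let W be a finite Weyl group with coroot lattice R^∨. For every w ∈ W, the ℤ-rank of the mod-set Mod(w) = (w − Id)R^∨ equals the reflection length ℓ_R(w) of w. -/

import Mathlib

open scoped RealInnerProductSpace

abbrev V (n : ℕ) : Type := EuclideanSpace ℝ (Fin n)

/-- `g` is the (orthogonal) reflection corresponding to the root `β`. -/
def IsReflAlong {n : ℕ} (β : V n) (g : V n ≃ₗ[ℝ] V n) : Prop :=
  ∀ v, g v = v - (2 * ⟪v, β⟫ / ⟪β, β⟫) • β

/-- `Φ` is a finite crystallographic root system spanning `ℝⁿ`. -/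
structure IsCrystalRootSystem {n : ℕ} (Φ : Set (V n)) : Prop where
  finite : Φ.Finite
  ne_zero : ∀ β ∈ Φ, β ≠ 0
  spans : Submodule.span ℝ Φ = ⊤
  refl_mem : ∀ α ∈ Φ, ∀ β ∈ Φ, β - (2 * ⟪β, α⟫ / ⟪α, α⟫) • α ∈ Φ
  crystal : ∀ α ∈ Φ, ∀ β ∈ Φ, ∃ z : ℤ, (2 * ⟪β, α⟫ / ⟪α, α⟫) = (z : ℝ)

/-- The reflection length of `w`: the least `k` such that `w` is a product of `k`
reflections of the root system `Φ`. -/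
noncomputable def reflLen {n : ℕ} (Φ : Set (V n)) (w : V n ≃ₗ[ℝ] V n) : ℕ :=
  sInf {k | ∃ l : List (V n ≃ₗ[ℝ] V n), l.length = k ∧
    (∀ g ∈ l, ∃ β ∈ Φ, IsReflAlong β g) ∧ l.prod = w}

/-- The Weyl group of `Φ`: the group generated by the reflections of `Φ`. -/
noncomputable def weylGroup {n : ℕ} (Φ : Set (V n)) : Subgroup (V n ≃ₗ[ℝ] V n) :=
  Subgroup.closure {g | ∃ β ∈ Φ, IsReflAlong β g}

/-- The coroot `β^∨ = 2β/(β,β)` of a root `β`. -/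
noncomputable def coroot {n : ℕ} (β : V n) : V n := (2 / ⟪β, β⟫) • β

/-- The coroot lattice: the `ℤ`-span of the coroots. -/
noncomputable def corootLattice {n : ℕ} (Φ : Set (V n)) : Submodule ℤ (V n) :=
  Submodule.span ℤ (coroot '' Φ)

/-- The move-set `Mov(w) = Im(w - Id)`. -/
noncomputable def movSet {n : ℕ} (w : V n ≃ₗ[ℝ] V n) : Submodule ℝ (V n) :=
  LinearMap.range (w.toLinearMap - LinearMap.id)

/-- The mod-set `Mod(w) = (w - Id)R^∨`. -/
noncomputable def modSet {n : ℕ} (Φ : Set (V n)) (w : V n ≃ₗ[ℝ] V n) : Submodule ℤ (V n) :=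
  Submodule.map ((w.toLinearMap - LinearMap.id).restrictScalars ℤ) (corootLattice Φ)

/-!
Both sides equal `dim Mov(w)`, where `Mov(w) = Im(w - Id)`.

`Mod(w)` lies in the coroot lattice, which is discrete because its vectors have integral inner
products with the roots, and these span; it spans `Mov(w)` because the coroots span. A discrete
subgroup has `ℤ`-rank equal to the dimension of its real span.

For the reflection length (Carter's lemma), `Mov` is subadditive, so a product of `k` reflections
has `dim Mov ≤ k`. Conversely, if `w ≠ 1` some root `β` lies in `Mov(w) = Fix(w)ᗮ`: otherwise
`Fix(w)` contains a vector `x` orthogonal to no root, and an element of the Weyl group fixing such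
an `x` is trivial, by the deletion condition for words in the simple reflections of the positive
system determined by `x`. Since `dim Mov(s_β w) = dim Mov(w) - 1`, induction finishes.
-/

open Module

section InnerProductSpace

variable {E : Type*} [NormedAddCommGroup E] [InnerProductSpace ℝ E]

/-- The reflection along `β`; for `β = 0` it is the identity, since `0 / 0 = 0`. -/
noncomputable def reflAlong (β : E) : E ≃ₗ[ℝ] E :=
  LinearEquiv.ofInvolutive
    { toFun := fun v => v - (2 * ⟪v, β⟫ / ⟪β, β⟫) • β
      map_add' := fun u v => by simp only [inner_add_left, mul_add, add_div, add_smul]; abel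
      map_smul' := fun c v => by
        simp only [real_inner_smul_left, RingHom.id_apply, smul_sub, smul_smul]
        ring_nf }
    fun v => by
      rcases eq_or_ne β 0 with rfl | hβ
      · simp
      have hββ : ⟪β, β⟫ ≠ 0 := inner_self_ne_zero.mpr hβ
      simp only [LinearMap.coe_mk, AddHom.coe_mk, inner_sub_left, real_inner_smul_left]
      match_scalars
      · ring
      · field_simp
        ring

@[simp]
lemma reflAlong_apply (β v : E) : reflAlong β v = v - (2 * ⟪v, β⟫ / ⟪β, β⟫) • β := rfl

lemma reflAlong_reflAlong (β v : E) : reflAlong β (reflAlong β v) = v :=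
  (reflAlong β).symm_apply_apply v

lemma reflAlong_mul_self (β : E) : reflAlong β * reflAlong β = 1 :=
  LinearEquiv.ext (reflAlong_reflAlong β)

lemma reflAlong_inv (β : E) : (reflAlong β)⁻¹ = reflAlong β :=
  inv_eq_of_mul_eq_one_right (reflAlong_mul_self β)

lemma reflAlong_self {β : E} (hβ : β ≠ 0) : reflAlong β β = -β := by
  rw [reflAlong_apply, mul_div_assoc, div_self (inner_self_ne_zero.mpr hβ), mul_one, two_smul]
  abel

lemma reflAlong_smul {β : E} {c : ℝ} (hc : c ≠ 0) : reflAlong (c • β) = reflAlong β := by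
  ext v
  rcases eq_or_ne β 0 with rfl | hβ
  · simp
  have hββ : ⟪β, β⟫ ≠ 0 := inner_self_ne_zero.mpr hβ
  simp only [reflAlong_apply, real_inner_smul_left, real_inner_smul_right, smul_smul]
  congr 2
  field_simp

lemma reflAlong_neg (β : E) : reflAlong (-β) = reflAlong β := by
  simpa using reflAlong_smul (β := β) (neg_ne_zero.mpr one_ne_zero)

lemma inner_reflAlong_reflAlong (β u v : E) : ⟪reflAlong β u, reflAlong β v⟫ = ⟪u, v⟫ := by
  rcases eq_or_ne β 0 with rfl | hβ
  · simp
  have hββ : ⟪β, β⟫ ≠ 0 := inner_self_ne_zero.mpr hβ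
  simp only [reflAlong_apply, inner_sub_left, inner_sub_right, real_inner_smul_left,
    real_inner_smul_right, real_inner_comm β v]
  field_simp
  ring

variable (E)

def orthogonalGroup : Subgroup (E ≃ₗ[ℝ] E) where
  carrier := {g | ∀ u v, ⟪g u, g v⟫ = ⟪u, v⟫}
  mul_mem' {g h} hg hh u v := (hg (h u) (h v)).trans (hh u v)
  one_mem' _ _ := rfl
  inv_mem' {g} hg u v := by
    rw [← hg, show g (g⁻¹ u) = u from g.apply_symm_apply u,
      show g (g⁻¹ v) = v from g.apply_symm_apply v]

variable {E}

lemma reflAlong_mem_orthogonalGroup (β : E) : reflAlong β ∈ orthogonalGroup E :=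
  inner_reflAlong_reflAlong β

lemma reflAlong_conj {g : E ≃ₗ[ℝ] E} (hg : g ∈ orthogonalGroup E) (β : E) :
    g * reflAlong β * g⁻¹ = reflAlong (g β) := by
  ext v
  have hv : g (g⁻¹ v) = v := g.apply_symm_apply v
  have hinner : ⟪g⁻¹ v, β⟫ = ⟪v, g β⟫ := by rw [← hg, hv]
  simp only [LinearEquiv.mul_apply, reflAlong_apply, map_sub, map_smul, hv, hinner, hg β β]

lemma eq_zero_of_forall_inner_eq_zero {s : Set E} (hspan : Submodule.span ℝ s = ⊤) {v : E}
    (h : ∀ r ∈ s, ⟪r, v⟫ = 0) : v = 0 := by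
  have hortho : (⊤ : Submodule ℝ E) ⟂ ℝ ∙ v :=
    hspan ▸ Submodule.isOrtho_span.mpr fun r hr u hu => by
      rw [Set.mem_singleton_iff.mp hu]
      exact h r hr
  exact Submodule.span_singleton_eq_bot.mp (Submodule.isOrtho_top_left.mp hortho)

lemma inner_nonpos_of_mem_hull {s : Set E} {v u : E} (hs : ∀ d ∈ s, ⟪d, v⟫ ≤ 0)
    (hu : u ∈ PointedCone.hull ℝ s) : ⟪u, v⟫ ≤ 0 := by
  induction hu using Submodule.span_induction with
  | mem d hd => exact hs d hd
  | zero => simp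
  | add u₁ u₂ _ _ h₁ h₂ => rw [inner_add_left]; linarith
  | smul c u _ h =>
    rw [← Nonneg.coe_smul, real_inner_smul_left]
    exact mul_nonpos_of_nonneg_of_nonpos c.2 h

/-- The positive part `∑_{g d > 0} g d • d` of a vanishing combination has nonpositive square
norm, and then its pairing with `x` shows that it is empty. -/
lemma coeff_nonpos_of_sum_eq_zero {s : Finset E} {x : E} (hx : ∀ d ∈ s, 0 < ⟪x, d⟫)
    (hs : ∀ d ∈ s, ∀ e ∈ s, d ≠ e → ⟪d, e⟫ ≤ 0) {g : E → ℝ} (hg : ∑ d ∈ s, g d • d = 0) :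
    ∀ d ∈ s, g d ≤ 0 := by
  classical
  set P := s.filter (0 < g ·)
  set v := ∑ d ∈ P, g d • d
  have hv : v = ∑ d ∈ s.filter (¬ 0 < g ·), (-g d) • d := by
    rw [← Finset.sum_filter_add_sum_filter_not s (0 < g ·)] at hg
    simp only [neg_smul, Finset.sum_neg_distrib]
    exact eq_neg_of_add_eq_zero_left hg
  have hvv : ⟪v, v⟫ ≤ 0 := by
    conv_lhs => arg 2; rw [hv]
    simp only [v, sum_inner, inner_sum, real_inner_smul_left, real_inner_smul_right]
    refine Finset.sum_nonpos fun p hp => Finset.sum_nonpos fun q hq => ?_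
    rw [Finset.mem_filter] at hp hq
    have hpq : q ≠ p := fun h => hq.2 (h ▸ hp.2)
    exact mul_nonpos_of_nonneg_of_nonpos hp.2.le <| mul_nonpos_of_nonneg_of_nonpos
      (neg_nonneg.mpr (not_lt.mp hq.2)) (hs q hq.1 p hp.1 hpq)
  have hv0 : ⟪x, v⟫ = 0 := by rw [real_inner_self_nonpos.mp hvv, inner_zero_right]
  intro d hd
  by_contra! hgd
  have hpos : 0 < ∑ p ∈ P, ⟪x, g p • p⟫ := by
    refine Finset.sum_pos (fun p hp => ?_) ⟨d, Finset.mem_filter.mpr ⟨hd, hgd⟩⟩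
    rw [Finset.mem_filter] at hp
    rw [real_inner_smul_right]
    exact mul_pos hp.2 (hx p hp.1)
  rw [inner_sum] at hv0
  exact hpos.ne' hv0

lemma linearIndepOn_of_inner_nonpos {s : Finset E} {x : E} (hx : ∀ d ∈ s, 0 < ⟪x, d⟫)
    (hs : ∀ d ∈ s, ∀ e ∈ s, d ≠ e → ⟪d, e⟫ ≤ 0) : LinearIndepOn ℝ id (s : Set E) := by
  refine linearIndepOn_finset_iff.mpr fun g hg d hd => le_antisymm
    (coeff_nonpos_of_sum_eq_zero hx hs hg d hd) ?_
  have hg' : ∑ d ∈ s, (-g) d • d = 0 := by simpa [neg_smul] using hg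
  simpa using coeff_nonpos_of_sum_eq_zero hx hs hg' d hd

lemma mem_span_singleton_of_add_mem {s : Finset E} (hs : LinearIndepOn ℝ id (s : Set E))
    {α u v : E} (hα : α ∈ s) (hu : u ∈ PointedCone.hull ℝ (s : Set E))
    (hv : v ∈ PointedCone.hull ℝ (s : Set E)) (huv : u + v ∈ ℝ ∙ α) : u ∈ ℝ ∙ α := by
  classical
  obtain ⟨f, -, rfl⟩ := Submodule.mem_span_finset.mp hu
  obtain ⟨g, -, rfl⟩ := Submodule.mem_span_finset.mp hv
  obtain ⟨c, hc⟩ := Submodule.mem_span_singleton.mp huv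
  have hsum : ∑ d ∈ s, ((f d : ℝ) + g d - if d = α then c else 0) • id d = 0 := by
    simp only [id, sub_smul, add_smul, Finset.sum_sub_distrib, Finset.sum_add_distrib, ite_smul,
      zero_smul, Finset.sum_ite_eq', if_pos hα, Nonneg.coe_smul, hc, sub_self]
  have hzero := linearIndepOn_finset_iff.mp hs _ hsum
  refine Submodule.mem_span_singleton.mpr ⟨f α, ?_⟩
  rw [Finset.sum_eq_single_of_mem α hα, Nonneg.coe_smul]
  intro d hd hdα
  have hd0 := hzero d hd
  rw [if_neg hdα, sub_zero] at hd0
  have hfd : (f d : ℝ) = 0 := by linarith [(f d).2, (g d).2]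
  rw [← Nonneg.coe_smul, hfd, zero_smul]

lemma Submodule.exists_mem_forall_inner_ne_zero (K : Submodule ℝ E) {s : Set E} (hs : s.Finite)
    (h : ∀ r ∈ s, ∃ v ∈ K, ⟪v, r⟫ ≠ 0) : ∃ x ∈ K, ∀ r ∈ s, ⟪x, r⟫ ≠ 0 := by
  by_contra! hcover
  have : Finite s := hs.to_subtype
  let p (r : s) : Submodule ℝ K := LinearMap.ker ((innerₛₗ ℝ (r : E)).comp K.subtype)
  have hp : ⋃ r, (p r : Set K) = Set.univ := Set.eq_univ_of_forall fun v => by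
    obtain ⟨r, hr, hvr⟩ := hcover v v.2
    exact Set.mem_iUnion.mpr ⟨⟨r, hr⟩, by simpa [p, real_inner_comm] using hvr⟩
  obtain ⟨r, hr⟩ := Subspace.exists_eq_top_of_iUnion_eq_univ hp
  obtain ⟨u, hu, hur⟩ := h r r.2
  have : (⟨u, hu⟩ : K) ∈ p r := hr ▸ trivial
  exact hur (by simpa [p, real_inner_comm] using this)

variable [FiniteDimensional ℝ E]

/-- The pairing with a finite spanning set `s` embeds `span ℤ T` into the lattice `ℤ^s`. -/
lemma discreteTopology_span_of_inner_int {s T : Set E} (hs : s.Finite)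
    (hspan : Submodule.span ℝ s = ⊤) (hT : ∀ t ∈ T, ∀ r ∈ s, ∃ z : ℤ, ⟪r, t⟫ = z) :
    DiscreteTopology (Submodule.span ℤ T) := by
  have : Finite s := hs.to_subtype
  let e : E →ₗ[ℝ] (s → ℝ) := LinearMap.pi fun r => innerₛₗ ℝ (r : E)
  have he : Function.Injective e := by
    refine (injective_iff_map_eq_zero e).mpr fun v hv => eq_zero_of_forall_inner_eq_zero hspan ?_
    exact fun r hr => congrFun hv ⟨r, hr⟩
  let Z : Submodule ℤ (s → ℝ) := Submodule.span ℤ (Set.range (Pi.basisFun ℝ s))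
  have hle : Submodule.span ℤ T ≤ Z.comap (e.restrictScalars ℤ) := by
    refine Submodule.span_le.mpr fun t ht => ?_
    refine ((Pi.basisFun ℝ s).mem_span_iff_repr_mem ℤ (e t)).mpr fun r => ?_
    obtain ⟨z, hz⟩ := hT t ht r r.2
    exact ⟨z, by simp [e, hz]⟩
  have : DiscreteTopology Z := ZSpan.discreteTopology_pi_basisFun
  exact .of_subset (.preimage_of_continuous_injective (Z : Set (s → ℝ))
    (LinearMap.continuous_of_finiteDimensional e) he) (SetLike.coe_subset_coe.mpr hle)

lemma finrank_int_eq_finrank_span (L : Submodule ℤ E) [DiscreteTopology L] :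
    finrank ℤ L = finrank ℝ (Submodule.span ℝ (L : Set E)) := by
  have := Real.finrank_eq_int_finrank_of_discrete (s := (L : Set E)) (by rwa [Submodule.span_eq])
  rw [Set.finrank, Set.finrank, Submodule.span_eq] at this
  exact this.symm

end InnerProductSpace

section MoveSet

variable {n : ℕ}

lemma isReflAlong_iff {β : V n} {g : V n ≃ₗ[ℝ] V n} : IsReflAlong β g ↔ g = reflAlong β :=
  ⟨fun h => LinearEquiv.ext h, fun h => h ▸ reflAlong_apply β⟩

noncomputable def fixSpace (w : V n ≃ₗ[ℝ] V n) : Submodule ℝ (V n) :=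
  LinearMap.ker (w.toLinearMap - LinearMap.id)

lemma mem_fixSpace {w : V n ≃ₗ[ℝ] V n} {v : V n} : v ∈ fixSpace w ↔ w v = v := by
  simp [fixSpace, sub_eq_zero]

lemma sub_mem_movSet (w : V n ≃ₗ[ℝ] V n) (u : V n) : w u - u ∈ movSet w :=
  ⟨u, rfl⟩

lemma movSet_eq_bot_iff {w : V n ≃ₗ[ℝ] V n} : movSet w = ⊥ ↔ w = 1 := by
  simp [movSet, LinearMap.range_eq_bot, sub_eq_zero, LinearEquiv.ext_iff, LinearMap.ext_iff]

lemma movSet_one : movSet (1 : V n ≃ₗ[ℝ] V n) = ⊥ :=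
  movSet_eq_bot_iff.mpr rfl

lemma movSet_mul_le (g h : V n ≃ₗ[ℝ] V n) : movSet (g * h) ≤ movSet g ⊔ movSet h := by
  rintro _ ⟨u, rfl⟩
  have hsplit : (g * h) u - u = (g (h u) - h u) + (h u - u) := by
    rw [LinearEquiv.mul_apply]; abel
  simpa [hsplit] using Submodule.add_mem_sup (sub_mem_movSet g (h u)) (sub_mem_movSet h u)

lemma movSet_reflAlong_le (β : V n) : movSet (reflAlong β) ≤ ℝ ∙ β := by
  rintro _ ⟨u, rfl⟩
  simp [Submodule.mem_span_singleton]

lemma finrank_movSet_reflAlong_le (β : V n) : finrank ℝ (movSet (reflAlong β)) ≤ 1 :=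
  (Submodule.finrank_mono (movSet_reflAlong_le β)).trans <| by
    simpa using finrank_span_le_card (R := ℝ) {β}

lemma finrank_movSet_mul_le (g h : V n ≃ₗ[ℝ] V n) :
    finrank ℝ (movSet (g * h)) ≤ finrank ℝ (movSet g) + finrank ℝ (movSet h) :=
  (Submodule.finrank_mono (movSet_mul_le g h)).trans
    (Submodule.finrank_add_le_finrank_add_finrank _ _)

lemma finrank_movSet_prod_le_length (l : List (V n ≃ₗ[ℝ] V n))
    (hl : ∀ g ∈ l, ∃ β, IsReflAlong β g) : finrank ℝ (movSet l.prod) ≤ l.length := by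
  induction l with
  | nil => exact (Submodule.finrank_eq_zero.mpr movSet_one).le
  | cons g t ih =>
    obtain ⟨β, hβ⟩ := hl g List.mem_cons_self
    have ht := ih fun g' hg' => hl g' (List.mem_cons_of_mem g hg')
    have hg := finrank_movSet_reflAlong_le β
    rw [← isReflAlong_iff.mp hβ] at hg
    rw [List.prod_cons, List.length_cons]
    exact (finrank_movSet_mul_le g t.prod).trans (by omega)

lemma inner_eq_zero_of_mem_fixSpace_of_mem_movSet {w : V n ≃ₗ[ℝ] V n}
    (hw : w ∈ orthogonalGroup (V n)) {u v : V n} (hu : u ∈ fixSpace w) (hv : v ∈ movSet w) :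
    ⟪u, v⟫ = 0 := by
  obtain ⟨y, rfl⟩ := hv
  rw [mem_fixSpace] at hu
  simp [inner_sub_right, ← hw u y, hu]

lemma orthogonal_movSet_le_fixSpace {w : V n ≃ₗ[ℝ] V n} (hw : w ∈ orthogonalGroup (V n)) :
    (movSet w)ᗮ ≤ fixSpace w := by
  intro v hv
  have hmov : ⟪w v - v, v⟫ = 0 := Submodule.inner_right_of_mem_orthogonal (sub_mem_movSet w v) hv
  have hww : ⟪w v, w v⟫ = ⟪v, v⟫ := hw v v
  have hcomm : ⟪v, w v⟫ = ⟪w v, v⟫ := real_inner_comm _ _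
  have : ⟪w v - v, w v - v⟫ = 0 := by
    simp only [inner_sub_left, inner_sub_right] at hmov ⊢
    linarith
  rwa [mem_fixSpace, ← sub_eq_zero, ← inner_self_eq_zero (𝕜 := ℝ)]

lemma movSet_eq_orthogonal_fixSpace {w : V n ≃ₗ[ℝ] V n} (hw : w ∈ orthogonalGroup (V n)) :
    movSet w = (fixSpace w)ᗮ := by
  refine le_antisymm (fun v hv => (Submodule.mem_orthogonal _ _).mpr fun u hu =>
    inner_eq_zero_of_mem_fixSpace_of_mem_movSet hw hu hv) ?_
  simpa only [Submodule.orthogonal_orthogonal] using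
    Submodule.orthogonal_le (orthogonal_movSet_le_fixSpace hw)

/-- A `u` with `w u = u + β` is fixed by `reflAlong β * w`, as `‖w u‖ = ‖u‖`; since
`⟪u, β⟫ ≠ 0`, the root `β` drops out of `Mov(reflAlong β * w) ≤ Mov(w)`. -/
lemma finrank_movSet_reflAlong_mul {w : V n ≃ₗ[ℝ] V n} (hw : w ∈ orthogonalGroup (V n))
    {β : V n} (hβ0 : β ≠ 0) (hβ : β ∈ movSet w) :
    finrank ℝ (movSet (reflAlong β * w)) + 1 = finrank ℝ (movSet w) := by
  have hββ : ⟪β, β⟫ ≠ 0 := inner_self_ne_zero.mpr hβ0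
  obtain ⟨u, hu⟩ := id hβ
  have hwu : w u = u + β := by rw [← hu]; simp
  have huβ : 2 * ⟪u, β⟫ = -⟪β, β⟫ := by
    have h := hw u u
    rw [hwu, inner_add_left, inner_add_right, inner_add_right, real_inner_comm u β] at h
    linarith
  have hfix : u ∈ fixSpace (reflAlong β * w) := by
    rw [mem_fixSpace, LinearEquiv.mul_apply, hwu, reflAlong_apply, inner_add_left, mul_add, huβ,
      show (-⟪β, β⟫ + 2 * ⟪β, β⟫) / ⟪β, β⟫ = 1 by field_simp; ring, one_smul, add_sub_cancel_right]
  have hnot : β ∉ movSet (reflAlong β * w) := fun h => hββ <| by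
    have := inner_eq_zero_of_mem_fixSpace_of_mem_movSet
      (mul_mem (reflAlong_mem_orthogonalGroup β) hw) hfix h
    linarith
  have hle : movSet (reflAlong β * w) ≤ movSet w :=
    (movSet_mul_le _ _).trans <| sup_le
      ((movSet_reflAlong_le β).trans ((Submodule.span_singleton_le_iff_mem β _).mpr hβ)) le_rfl
  have hlt : finrank ℝ (movSet (reflAlong β * w)) < finrank ℝ (movSet w) :=
    Submodule.finrank_lt_finrank_of_lt (lt_of_le_of_ne hle fun h => hnot (h ▸ hβ))
  have hge := finrank_movSet_mul_le (reflAlong β) (reflAlong β * w)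
  rw [← mul_assoc, reflAlong_mul_self, one_mul] at hge
  have := finrank_movSet_reflAlong_le β
  omega

end MoveSet

section RootSystem

variable {n : ℕ} {Φ : Set (V n)}

lemma reflAlong_mem_weylGroup {β : V n} (hβ : β ∈ Φ) : reflAlong β ∈ weylGroup Φ :=
  Subgroup.subset_closure ⟨β, hβ, isReflAlong_iff.mpr rfl⟩

lemma weylGroup_le_orthogonalGroup : weylGroup Φ ≤ orthogonalGroup (V n) := by
  rw [weylGroup, Subgroup.closure_le]
  rintro g ⟨β, -, hg⟩
  exact isReflAlong_iff.mp hg ▸ reflAlong_mem_orthogonalGroup β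

lemma list_prod_reflAlong_mem_weylGroup {l : List (V n)} (hl : ∀ β ∈ l, β ∈ Φ) :
    (l.map reflAlong).prod ∈ weylGroup Φ :=
  list_prod_mem fun g hg => by
    obtain ⟨β, hβ, rfl⟩ := List.mem_map.mp hg
    exact reflAlong_mem_weylGroup (hl β hβ)

lemma coroot_apply_of_mem_orthogonalGroup {w : V n ≃ₗ[ℝ] V n} (hw : w ∈ orthogonalGroup (V n))
    (β : V n) : w (coroot β) = coroot (w β) := by
  rw [coroot, coroot, map_smul, hw]

namespace IsCrystalRootSystem

lemma reflAlong_mem (hΦ : IsCrystalRootSystem Φ) {α r : V n} (hα : α ∈ Φ) (hr : r ∈ Φ) :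
    reflAlong α r ∈ Φ :=
  hΦ.refl_mem α hα r hr

lemma neg_mem (hΦ : IsCrystalRootSystem Φ) {α : V n} (hα : α ∈ Φ) : -α ∈ Φ := by
  simpa only [reflAlong_self (hΦ.ne_zero α hα)] using hΦ.reflAlong_mem hα hα

lemma sub_mem_of_inner_pos (hΦ : IsCrystalRootSystem Φ) {α β : V n} (hα : α ∈ Φ) (hβ : β ∈ Φ)
    (hpos : 0 < ⟪α, β⟫) (hne : α ≠ β) : α - β ∈ Φ := by
  have hαα : 0 < ⟪α, α⟫ := real_inner_self_pos.mpr (hΦ.ne_zero α hα)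
  have hββ : 0 < ⟪β, β⟫ := real_inner_self_pos.mpr (hΦ.ne_zero β hβ)
  obtain ⟨a, ha⟩ := hΦ.crystal β hβ α hα
  obtain ⟨b, hb⟩ := hΦ.crystal α hα β hβ
  rw [real_inner_comm] at hb
  have ha0 : (0 : ℝ) < a := ha ▸ by positivity
  have hb0 : (0 : ℝ) < b := hb ▸ by positivity
  rcases (show a = 1 ∨ 2 ≤ a by have : 0 < a := (by exact_mod_cast ha0); omega) with rfl | ha2
  · have h : α - (2 * ⟪α, β⟫ / ⟪β, β⟫) • β ∈ Φ := hΦ.refl_mem β hβ α hα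
    rwa [ha, Int.cast_one, one_smul] at h
  rcases (show b = 1 ∨ 2 ≤ b by have : 0 < b := (by exact_mod_cast hb0); omega) with rfl | hb2
  · have h : β - (2 * ⟪β, α⟫ / ⟪α, α⟫) • α ∈ Φ := hΦ.refl_mem α hα β hβ
    rw [real_inner_comm, hb, Int.cast_one, one_smul] at h
    simpa using hΦ.neg_mem h
  -- two integers `≥ 2` would force `‖α - β‖² ≤ 0`
  have ha2' : (2 : ℝ) ≤ a := by exact_mod_cast ha2
  have hb2' : (2 : ℝ) ≤ b := by exact_mod_cast hb2
  rw [div_eq_iff hββ.ne'] at ha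
  rw [div_eq_iff hαα.ne'] at hb
  have hsq : ⟪α - β, α - β⟫ ≤ 0 := by
    rw [inner_sub_left, inner_sub_right, inner_sub_right, real_inner_comm α β]
    nlinarith
  exact absurd (sub_eq_zero.mp (real_inner_self_nonpos.mp hsq)) hne

open Pointwise in
lemma weylGroup_le_stabilizer (hΦ : IsCrystalRootSystem Φ) :
    weylGroup Φ ≤ MulAction.stabilizer (V n ≃ₗ[ℝ] V n) Φ := by
  rw [weylGroup, Subgroup.closure_le]
  rintro g ⟨β, hβ, hg⟩
  obtain rfl := isReflAlong_iff.mp hg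
  have hsub : reflAlong β • Φ ⊆ Φ :=
    Set.smul_set_subset_iff.mpr fun r hr => hΦ.reflAlong_mem hβ hr
  refine MulAction.mem_stabilizer_iff.mpr (hsub.antisymm fun r hr => ?_)
  rw [← reflAlong_reflAlong β r]
  exact Set.smul_mem_smul_set (hΦ.reflAlong_mem hβ hr)

open Pointwise in
lemma apply_mem (hΦ : IsCrystalRootSystem Φ) {w : V n ≃ₗ[ℝ] V n} (hw : w ∈ weylGroup Φ)
    {r : V n} (hr : r ∈ Φ) : w r ∈ Φ := by
  have h : w • r ∈ w • Φ := Set.smul_mem_smul_set hr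
  rwa [MulAction.mem_stabilizer_iff.mp (hΦ.weylGroup_le_stabilizer hw)] at h

lemma span_coroot (hΦ : IsCrystalRootSystem Φ) : Submodule.span ℝ (coroot '' Φ) = ⊤ := by
  refine eq_top_iff.mpr (hΦ.spans ▸ Submodule.span_le.mpr fun r hr => ?_)
  have hrr : ⟪r, r⟫ ≠ 0 := inner_self_ne_zero.mpr (hΦ.ne_zero r hr)
  have hr' : r = (⟪r, r⟫ / 2) • coroot r := by
    rw [coroot, smul_smul, div_mul_div_comm, mul_comm, div_self (by positivity), one_smul]
  rw [hr']
  exact Submodule.smul_mem _ _ (Submodule.subset_span ⟨r, hr, rfl⟩)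

lemma discreteTopology_corootLattice (hΦ : IsCrystalRootSystem Φ) :
    DiscreteTopology (corootLattice Φ) := by
  refine discreteTopology_span_of_inner_int hΦ.finite hΦ.spans ?_
  rintro _ ⟨β, hβ, rfl⟩ r hr
  obtain ⟨z, hz⟩ := hΦ.crystal β hβ r hr
  refine ⟨z, ?_⟩
  rw [coroot, real_inner_smul_right, ← hz]
  ring

lemma modSet_le_corootLattice (hΦ : IsCrystalRootSystem Φ) {w : V n ≃ₗ[ℝ] V n}
    (hw : w ∈ weylGroup Φ) : modSet Φ w ≤ corootLattice Φ := by
  have hstable : ∀ v ∈ corootLattice Φ, w v ∈ corootLattice Φ := by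
    intro v hv
    refine Submodule.span_induction (p := fun v _ => w v ∈ corootLattice Φ) ?_ (by simp)
      (fun u v _ _ hu hv => by simpa using add_mem hu hv)
      (fun z v _ hv => by simpa using Submodule.smul_mem _ z hv) hv
    rintro _ ⟨β, hβ, rfl⟩
    rw [coroot_apply_of_mem_orthogonalGroup (weylGroup_le_orthogonalGroup hw)]
    exact Submodule.subset_span ⟨w β, hΦ.apply_mem hw hβ, rfl⟩
  rintro _ ⟨v, hv, rfl⟩
  exact sub_mem (hstable v hv) hv

lemma span_modSet (hΦ : IsCrystalRootSystem Φ) (w : V n ≃ₗ[ℝ] V n) :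
    Submodule.span ℝ (modSet Φ w : Set (V n)) = movSet w := by
  rw [modSet, corootLattice, Submodule.map_span, Submodule.span_span_of_tower,
    LinearMap.coe_restrictScalars, ← Submodule.map_span, hΦ.span_coroot, Submodule.map_top]
  rfl

lemma finrank_modSet (hΦ : IsCrystalRootSystem Φ) {w : V n ≃ₗ[ℝ] V n}
    (hw : w ∈ weylGroup Φ) : finrank ℤ (modSet Φ w) = finrank ℝ (movSet w) := by
  have := hΦ.discreteTopology_corootLattice
  have : DiscreteTopology (modSet Φ w) := .of_subset this (hΦ.modSet_le_corootLattice hw)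
  rw [finrank_int_eq_finrank_span, hΦ.span_modSet]

open Classical in
noncomputable def posRoots (hΦ : IsCrystalRootSystem Φ) (x : V n) : Finset (V n) :=
  hΦ.finite.toFinset.filter (0 < ⟪x, ·⟫)

open Classical in
noncomputable def simpleRoots (hΦ : IsCrystalRootSystem Φ) (x : V n) : Finset (V n) :=
  (hΦ.posRoots x).filter fun α => ∀ p ∈ hΦ.posRoots x, ∀ q ∈ hΦ.posRoots x, p + q ≠ α

noncomputable def simpleWeylGroup (hΦ : IsCrystalRootSystem Φ) (x : V n) :
    Subgroup (V n ≃ₗ[ℝ] V n) :=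
  Subgroup.closure (reflAlong '' (hΦ.simpleRoots x : Set (V n)))

section SimpleRoots

variable (hΦ : IsCrystalRootSystem Φ) {x : V n}

lemma mem_posRoots {r : V n} : r ∈ hΦ.posRoots x ↔ r ∈ Φ ∧ 0 < ⟪x, r⟫ := by
  simp [posRoots]

lemma mem_simpleRoots {α : V n} : α ∈ hΦ.simpleRoots x ↔
    α ∈ hΦ.posRoots x ∧ ∀ p ∈ hΦ.posRoots x, ∀ q ∈ hΦ.posRoots x, p + q ≠ α := by
  simp [simpleRoots]

lemma simpleRoots_subset : hΦ.simpleRoots x ⊆ hΦ.posRoots x :=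
  Finset.filter_subset _ _

lemma mem_of_mem_posRoots {r : V n} (hr : r ∈ hΦ.posRoots x) : r ∈ Φ :=
  (hΦ.mem_posRoots.mp hr).1

lemma inner_pos_of_mem_posRoots {r : V n} (hr : r ∈ hΦ.posRoots x) : 0 < ⟪x, r⟫ :=
  (hΦ.mem_posRoots.mp hr).2

lemma posRoots_induction {P : V n → Prop}
    (h : ∀ r ∈ hΦ.posRoots x, (∀ q ∈ hΦ.posRoots x, ⟪x, q⟫ < ⟪x, r⟫ → P q) → P r)
    {r : V n} (hr : r ∈ hΦ.posRoots x) : P r :=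
  ((hΦ.posRoots x).finite_toSet.wellFoundedOn (r := fun p q => ⟪x, p⟫ < ⟪x, q⟫)).induction hr h

lemma mem_posRoots_or_neg_mem (hx : ∀ r ∈ Φ, ⟪x, r⟫ ≠ 0) {r : V n} (hr : r ∈ Φ) :
    r ∈ hΦ.posRoots x ∨ -r ∈ hΦ.posRoots x := by
  simp only [mem_posRoots, inner_neg_right, neg_pos]
  rcases (hx r hr).lt_or_gt with h | h
  · exact .inr ⟨hΦ.neg_mem hr, h⟩
  · exact .inl ⟨hr, h⟩

lemma mem_hull_simpleRoots {r : V n} (hr : r ∈ hΦ.posRoots x) :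
    r ∈ PointedCone.hull ℝ (hΦ.simpleRoots x : Set (V n)) := by
  refine hΦ.posRoots_induction (fun r hr ih => ?_) hr
  by_cases hs : r ∈ hΦ.simpleRoots x
  · exact PointedCone.subset_hull hs
  obtain ⟨p, hp, q, hq, rfl⟩ : ∃ p ∈ hΦ.posRoots x, ∃ q ∈ hΦ.posRoots x, p + q = r := by
    simpa [hΦ.mem_simpleRoots, hr] using hs
  have hpx := hΦ.inner_pos_of_mem_posRoots hp
  have hqx := hΦ.inner_pos_of_mem_posRoots hq
  exact add_mem (ih p hp (by rw [inner_add_right]; linarith))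
    (ih q hq (by rw [inner_add_right]; linarith))

lemma inner_simpleRoots_nonpos (hx : ∀ r ∈ Φ, ⟪x, r⟫ ≠ 0) {α β : V n}
    (hα : α ∈ hΦ.simpleRoots x) (hβ : β ∈ hΦ.simpleRoots x) (hne : α ≠ β) : ⟪α, β⟫ ≤ 0 := by
  rw [mem_simpleRoots] at hα hβ
  by_contra! hpos
  have hsub := hΦ.sub_mem_of_inner_pos (hΦ.mem_of_mem_posRoots hα.1)
    (hΦ.mem_of_mem_posRoots hβ.1) hpos hne
  rcases hΦ.mem_posRoots_or_neg_mem hx hsub with h | h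
  · exact hα.2 _ h _ hβ.1 (sub_add_cancel α β)
  · exact hβ.2 _ h _ hα.1 (by abel)

lemma linearIndepOn_simpleRoots (hx : ∀ r ∈ Φ, ⟪x, r⟫ ≠ 0) :
    LinearIndepOn ℝ id (hΦ.simpleRoots x : Set (V n)) :=
  linearIndepOn_of_inner_nonpos
    (fun _ hd => hΦ.inner_pos_of_mem_posRoots (hΦ.simpleRoots_subset hd))
    fun _ hα _ hβ => hΦ.inner_simpleRoots_nonpos hx hα hβ

lemma reflAlong_mem_posRoots (hx : ∀ r ∈ Φ, ⟪x, r⟫ ≠ 0) {α r : V n}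
    (hα : α ∈ hΦ.simpleRoots x) (hr : r ∈ hΦ.posRoots x) (hrα : r ∉ ℝ ∙ α) :
    reflAlong α r ∈ hΦ.posRoots x := by
  have hαΦ := hΦ.mem_of_mem_posRoots (hΦ.simpleRoots_subset hα)
  have hrΦ := hΦ.mem_of_mem_posRoots hr
  refine (hΦ.mem_posRoots_or_neg_mem hx (hΦ.reflAlong_mem hαΦ hrΦ)).resolve_right fun hneg => ?_
  refine hrα (mem_span_singleton_of_add_mem (hΦ.linearIndepOn_simpleRoots hx) hα
    (hΦ.mem_hull_simpleRoots hr) (hΦ.mem_hull_simpleRoots hneg) ?_)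
  rw [reflAlong_apply, neg_sub, add_sub_cancel]
  exact Submodule.smul_mem _ _ (Submodule.mem_span_singleton_self α)

lemma exists_simpleRoots_inner_pos {r : V n} (hr : r ∈ hΦ.posRoots x) :
    ∃ α ∈ hΦ.simpleRoots x, 0 < ⟪α, r⟫ := by
  by_contra! h
  have hrr := inner_nonpos_of_mem_hull h (hΦ.mem_hull_simpleRoots hr)
  exact hΦ.ne_zero r (hΦ.mem_of_mem_posRoots hr) (real_inner_self_nonpos.mp hrr)

lemma reflAlong_mem_simpleWeylGroup (hx : ∀ r ∈ Φ, ⟪x, r⟫ ≠ 0) {r : V n}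
    (hr : r ∈ hΦ.posRoots x) : reflAlong r ∈ hΦ.simpleWeylGroup x := by
  refine hΦ.posRoots_induction (P := fun r => reflAlong r ∈ hΦ.simpleWeylGroup x)
    (fun r hr ih => ?_) hr
  obtain ⟨α, hα, hαr⟩ := hΦ.exists_simpleRoots_inner_pos hr
  have hsα : reflAlong α ∈ hΦ.simpleWeylGroup x := Subgroup.subset_closure ⟨α, hα, rfl⟩
  by_cases hrα : r ∈ ℝ ∙ α
  · obtain ⟨c, rfl⟩ := Submodule.mem_span_singleton.mp hrα
    have hc : c ≠ 0 := by rintro rfl; exact hΦ.ne_zero _ (hΦ.mem_of_mem_posRoots hr) (zero_smul ℝ α)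
    rwa [reflAlong_smul hc]
  -- `reflAlong α r` is a lower positive root, and `reflAlong α` conjugates its reflection
  -- to `reflAlong r`
  have hαx := hΦ.inner_pos_of_mem_posRoots (hΦ.simpleRoots_subset hα)
  have hαα : 0 < ⟪α, α⟫ := real_inner_self_pos.mpr
    (hΦ.ne_zero α (hΦ.mem_of_mem_posRoots (hΦ.simpleRoots_subset hα)))
  have hlt : ⟪x, reflAlong α r⟫ < ⟪x, r⟫ := by
    rw [reflAlong_apply, inner_sub_right, real_inner_smul_right, real_inner_comm α r]
    have : 0 < 2 * ⟪α, r⟫ / ⟪α, α⟫ := by positivity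
    nlinarith
  have hconj := reflAlong_conj (reflAlong_mem_orthogonalGroup α) (reflAlong α r)
  rw [reflAlong_reflAlong] at hconj
  rw [← hconj]
  exact mul_mem (mul_mem hsα (ih _ (hΦ.reflAlong_mem_posRoots hx hα hr hrα) hlt)) (inv_mem hsα)

lemma weylGroup_le_simpleWeylGroup (hx : ∀ r ∈ Φ, ⟪x, r⟫ ≠ 0) :
    weylGroup Φ ≤ hΦ.simpleWeylGroup x := by
  rw [weylGroup, Subgroup.closure_le]
  rintro g ⟨β, hβ, hg⟩
  rw [isReflAlong_iff.mp hg]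
  rcases hΦ.mem_posRoots_or_neg_mem hx hβ with h | h
  · exact hΦ.reflAlong_mem_simpleWeylGroup hx h
  · have := hΦ.reflAlong_mem_simpleWeylGroup hx h
    rwa [reflAlong_neg] at this

lemma exists_list_of_mem_simpleWeylGroup {w : V n ≃ₗ[ℝ] V n} (hw : w ∈ hΦ.simpleWeylGroup x) :
    ∃ l : List (V n), (∀ α ∈ l, α ∈ hΦ.simpleRoots x) ∧ (l.map reflAlong).prod = w := by
  induction hw using Subgroup.closure_induction with
  | mem _ h =>
    obtain ⟨α, hα, rfl⟩ := h
    exact ⟨[α], by simpa using hα, by simp⟩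
  | one => exact ⟨[], by simp, by simp⟩
  | mul _ _ _ _ h₁ h₂ =>
    obtain ⟨l₁, hl₁, rfl⟩ := h₁
    obtain ⟨l₂, hl₂, rfl⟩ := h₂
    exact ⟨l₁ ++ l₂, fun α hα => (List.mem_append.mp hα).elim (hl₁ α) (hl₂ α), by simp⟩
  | inv _ _ h =>
    obtain ⟨l, hl, rfl⟩ := h
    refine ⟨l.reverse, by simpa using hl, ?_⟩
    simp [List.prod_inv_reverse, List.map_reverse, Function.comp_def, reflAlong_inv]

/-- The deletion condition for words in simple reflections. -/
lemma exists_list_map_prod_mul_reflAlong (hx : ∀ r ∈ Φ, ⟪x, r⟫ ≠ 0) {α : V n}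
    (hα : α ∈ hΦ.simpleRoots x) (l : List (V n)) (hl : ∀ δ ∈ l, δ ∈ hΦ.simpleRoots x)
    (hneg : ⟪x, (l.map reflAlong).prod α⟫ < 0) :
    ∃ l' : List (V n), (∀ δ ∈ l', δ ∈ hΦ.simpleRoots x) ∧ l'.length + 1 = l.length ∧
      (l'.map reflAlong).prod = (l.map reflAlong).prod * reflAlong α := by
  have hαpos := hΦ.mem_posRoots.mp (hΦ.simpleRoots_subset hα)
  induction l with
  | nil => simp at hneg; linarith [hαpos.2]
  | cons δ t ih =>
    have hδ := hl δ List.mem_cons_self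
    have ht : ∀ δ ∈ t, δ ∈ hΦ.simpleRoots x := fun δ' h => hl δ' (List.mem_cons_of_mem δ h)
    simp only [List.map_cons, List.prod_cons, LinearEquiv.mul_apply] at hneg ⊢
    set u := (t.map reflAlong).prod
    by_cases htneg : ⟪x, u α⟫ < 0
    · obtain ⟨t', ht', hlen, hprod⟩ := ih ht htneg
      exact ⟨δ :: t', fun δ' h => (List.mem_cons.mp h).elim (· ▸ hδ) (ht' δ'),
        by simp [hlen], by simp [hprod, mul_assoc]⟩
    -- otherwise `u α` is a positive root made negative by `reflAlong δ`, hence a multiple of `δ`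
    have huW : u ∈ weylGroup Φ := list_prod_reflAlong_mem_weylGroup fun β hβ =>
      hΦ.mem_of_mem_posRoots (hΦ.simpleRoots_subset (ht β hβ))
    have huα : u α ∈ hΦ.posRoots x := hΦ.mem_posRoots.mpr ⟨hΦ.apply_mem huW hαpos.1,
      (not_lt.mp htneg).lt_of_ne (hx _ (hΦ.apply_mem huW hαpos.1)).symm⟩
    have huαδ : u α ∈ ℝ ∙ δ := by
      by_contra h
      exact lt_asymm hneg (hΦ.inner_pos_of_mem_posRoots (hΦ.reflAlong_mem_posRoots hx hδ huα h))
    obtain ⟨c, hc⟩ := Submodule.mem_span_singleton.mp huαδ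
    have hc0 : c ≠ 0 := by
      rintro rfl
      exact hΦ.ne_zero _ (hΦ.mem_of_mem_posRoots huα) (by rw [← hc, zero_smul])
    have hδu : reflAlong δ = u * reflAlong α * u⁻¹ := by
      rw [reflAlong_conj (weylGroup_le_orthogonalGroup huW), ← hc, reflAlong_smul hc0]
    refine ⟨t, ht, rfl, ?_⟩
    rw [hδu, inv_mul_cancel_right, mul_assoc, reflAlong_mul_self, mul_one]

lemma list_map_prod_eq_one_of_apply_eq_self (hx : ∀ r ∈ Φ, ⟪x, r⟫ ≠ 0) (l : List (V n))
    (hl : ∀ α ∈ l, α ∈ hΦ.simpleRoots x) (hfix : (l.map reflAlong).prod x = x) :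
    (l.map reflAlong).prod = 1 := by
  induction h : l.length using Nat.strong_induction_on generalizing l with
  | _ k ih =>
  rcases l.eq_nil_or_concat with rfl | ⟨t, α, rfl⟩
  · simp
  have hα : α ∈ hΦ.simpleRoots x := hl α (by simp)
  have ht : ∀ δ ∈ t, δ ∈ hΦ.simpleRoots x := fun δ hδ => hl δ (by simp [hδ])
  have hαpos := hΦ.mem_posRoots.mp (hΦ.simpleRoots_subset hα)
  have hwO := weylGroup_le_orthogonalGroup <| list_prod_reflAlong_mem_weylGroup (Φ := Φ)
    (l := t.concat α) fun β hβ => hΦ.mem_of_mem_posRoots (hΦ.simpleRoots_subset (hl β hβ))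
  have hwα : ((t.concat α).map reflAlong).prod α = -(t.map reflAlong).prod α := by
    simp [reflAlong_self (hΦ.ne_zero α hαpos.1)]
  have hneg : ⟪x, (t.map reflAlong).prod α⟫ < 0 := by
    have := hwO x α
    rw [hfix, hwα, inner_neg_right] at this
    linarith [hαpos.2]
  obtain ⟨t', ht', hlen, hprod⟩ := hΦ.exists_list_map_prod_mul_reflAlong hx hα t ht hneg
  have heq : ((t.concat α).map reflAlong).prod = (t'.map reflAlong).prod := by simp [hprod]
  rw [heq] at hfix ⊢
  exact ih t'.length (by simp at h; omega) t' ht' hfix rfl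

end SimpleRoots

lemma eq_one_of_apply_eq_self (hΦ : IsCrystalRootSystem Φ) {x : V n}
    (hx : ∀ r ∈ Φ, ⟪x, r⟫ ≠ 0) {w : V n ≃ₗ[ℝ] V n} (hw : w ∈ weylGroup Φ) (hfix : w x = x) :
    w = 1 := by
  obtain ⟨l, hl, rfl⟩ :=
    hΦ.exists_list_of_mem_simpleWeylGroup (hΦ.weylGroup_le_simpleWeylGroup hx hw)
  exact hΦ.list_map_prod_eq_one_of_apply_eq_self hx l hl hfix

/-- If no root lies in `Mov(w) = Fix(w)ᗮ`, then `Fix(w)` contains a regular vector, which `w`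
fixes. -/
lemma exists_mem_movSet (hΦ : IsCrystalRootSystem Φ) {w : V n ≃ₗ[ℝ] V n}
    (hw : w ∈ weylGroup Φ) (hne : w ≠ 1) : ∃ β ∈ Φ, β ∈ movSet w := by
  by_contra! h
  simp only [movSet_eq_orthogonal_fixSpace (weylGroup_le_orthogonalGroup hw),
    Submodule.mem_orthogonal, not_forall] at h
  obtain ⟨x, hxw, hx⟩ := (fixSpace w).exists_mem_forall_inner_ne_zero hΦ.finite
    fun r hr => by simpa using h r hr
  exact hne (hΦ.eq_one_of_apply_eq_self hx hw (mem_fixSpace.mp hxw))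

lemma exists_list_length_eq_finrank (hΦ : IsCrystalRootSystem Φ) {w : V n ≃ₗ[ℝ] V n}
    (hw : w ∈ weylGroup Φ) : ∃ l : List (V n), (∀ β ∈ l, β ∈ Φ) ∧
      l.length = finrank ℝ (movSet w) ∧ (l.map reflAlong).prod = w := by
  induction h : finrank ℝ (movSet w) generalizing w with
  | zero => exact ⟨[], by simp, rfl, (movSet_eq_bot_iff.mp (Submodule.finrank_eq_zero.mp h)).symm⟩
  | succ k ih =>
    have hw1 : w ≠ 1 := by rintro rfl; rw [movSet_one, finrank_bot] at h; omega
    obtain ⟨β, hβ, hβw⟩ := hΦ.exists_mem_movSet hw hw1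
    have hdrop := finrank_movSet_reflAlong_mul (weylGroup_le_orthogonalGroup hw)
      (hΦ.ne_zero β hβ) hβw
    obtain ⟨l, hl, hlen, hprod⟩ := ih (mul_mem (reflAlong_mem_weylGroup hβ) hw) (by omega)
    refine ⟨β :: l, fun γ hγ => (List.mem_cons.mp hγ).elim (· ▸ hβ) (hl γ), by simp [hlen], ?_⟩
    simp [hprod, ← mul_assoc, reflAlong_mul_self]

theorem reflLen_eq_finrank_movSet (hΦ : IsCrystalRootSystem Φ) {w : V n ≃ₗ[ℝ] V n}
    (hw : w ∈ weylGroup Φ) : reflLen Φ w = finrank ℝ (movSet w) := by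
  obtain ⟨l, hl, hlen, hprod⟩ := hΦ.exists_list_length_eq_finrank hw
  have hmem : finrank ℝ (movSet w) ∈ {k | ∃ l : List (V n ≃ₗ[ℝ] V n), l.length = k ∧
      (∀ g ∈ l, ∃ β ∈ Φ, IsReflAlong β g) ∧ l.prod = w} := by
    refine ⟨l.map reflAlong, by simp [hlen], fun g hg => ?_, hprod⟩
    obtain ⟨β, hβ, rfl⟩ := List.mem_map.mp hg
    exact ⟨β, hl β hβ, isReflAlong_iff.mpr rfl⟩
  refine le_antisymm (Nat.sInf_le hmem) (le_csInf ⟨_, hmem⟩ ?_)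
  rintro k ⟨l', rfl, hl', rfl⟩
  exact finrank_movSet_prod_le_length l' fun g hg => (hl' g hg).imp fun _ hβ => hβ.2

end IsCrystalRootSystem

end RootSystem

/-- For every element `w` of the Weyl group of a crystallographic root system `Φ`, the
`ℤ`-rank of the mod-set `Mod(w) = (w − Id)R^∨` equals the reflection length of `w`. -/
theorem finrank_modSet_eq_reflLen {n : ℕ} (Φ : Set (V n)) (hΦ : IsCrystalRootSystem Φ)
    (w : V n ≃ₗ[ℝ] V n) (hw : w ∈ weylGroup Φ) :
    Module.finrank ℤ (modSet Φ w) = reflLen Φ w := by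
  rw [hΦ.finrank_modSet hw, hΦ.reflLen_eq_finrank_movSet hw]
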